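/- arXiv:2211.01074 — 2 statements merged into one kernel-verified Lean document; each statement's English description precedes it below -/
import Mathlib

section
/- Let F be a field and let L be a non-nilpotent left Leibniz algebra over F with dim_F L = 3 which is not a Lie algebra. Assume ζ(L) ≠ 0 and dim_F Leib(L) = 2. Then dim_F ζ(L) = 1 and ζ(L) ⊆ Leib(L). -/
open Module Polynomial

variable {F L : Type*} [Field F] [AddCommGroup L] [Module F L]

/-- The left Leibniz identity for a bilinear bracket. -/
def IsLeibniz (β : L →ₗ[F] L →ₗ[F] L) : Prop :=
  ∀ a b c : L, β (β a b) c = β a (β b c) - β b (β a c)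

/-- The Leibniz kernel `Leib(L)`: the subspace spanned by all squares `[a,a]`. -/
def leibKer (β : L →ₗ[F] L →ₗ[F] L) : Submodule F L :=
  Submodule.span F (Set.range fun a => β a a)

/-- The center `ζ(L)` of a Leibniz algebra. -/
def lzCenter (β : L →ₗ[F] L →ₗ[F] L) : Submodule F L where
  carrier := {x | ∀ y, β x y = 0 ∧ β y x = 0}
  add_mem' := by
    intro a b ha hb y
    refine ⟨?_, ?_⟩
    · rw [map_add, LinearMap.add_apply, (ha y).1, (hb y).1, add_zero]
    · rw [map_add, (ha y).2, (hb y).2, add_zero]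
  zero_mem' := by
    intro y
    refine ⟨?_, ?_⟩ <;> simp
  smul_mem' := by
    intro c a ha y
    refine ⟨?_, ?_⟩
    · rw [map_smul, LinearMap.smul_apply, (ha y).1, smul_zero]
    · rw [map_smul, (ha y).2, smul_zero]

/-- The derived subalgebra `[L,L]`. -/
def leibDerived (β : L →ₗ[F] L →ₗ[F] L) : Submodule F L :=
  Submodule.span F {x | ∃ a b : L, β a b = x}

/-- The lower central series: `leibGamma β 1 = ⊤`, `leibGamma β (k+1) = [L, leibGamma β k]`. -/
def leibGamma (β : L →ₗ[F] L →ₗ[F] L) : ℕ → Submodule F L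
  | 0 => ⊤
  | 1 => ⊤
  | (n+2) => Submodule.span F {x | ∃ a b : L, b ∈ leibGamma β (n+1) ∧ β a b = x}

/-- The derived series: `leibDelta β 0 = ⊤`, `leibDelta β (n+1) = [leibDelta β n, leibDelta β n]`. -/
def leibDelta (β : L →ₗ[F] L →ₗ[F] L) : ℕ → Submodule F L
  | 0 => ⊤
  | (n+1) => Submodule.span F
      {x | ∃ a ∈ leibDelta β n, ∃ b ∈ leibDelta β n, β a b = x}

/-- Multiplication table predicate: the brackets of the triple `a` are given by `t`. -/
def MulTbl (β : L →ₗ[F] L →ₗ[F] L) (a : Fin 3 → L) (t : Fin 3 → Fin 3 → L) : Prop :=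
  ∀ i j, β (a i) (a j) = t i j

theorem stmt18 (β : L →ₗ[F] L →ₗ[F] L) (hLeib : IsLeibniz β)
    (hdim : finrank F L = 3) (hnotLie : ∃ a : L, β a a ≠ 0)
    (hnonnil : ¬ ∃ k : ℕ, leibGamma β k = ⊥)
    (hc : lzCenter β ≠ ⊥) (hk : finrank F (leibKer β) = 2) :
    finrank F (lzCenter β) = 1 ∧ lzCenter β ≤ leibKer β := by
  classical
  have hfd : FiniteDimensional F L := FiniteDimensional.of_finrank_pos (by rw [hdim]; norm_num)
  set K := leibKer β with hK
  have hsq : ∀ a : L, β a a ∈ K := fun a => Submodule.subset_span ⟨a, rfl⟩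
  have hleft : ∀ k ∈ K, β k = 0 := by
    have hle : K ≤ LinearMap.ker β := by
      rw [hK, leibKer, Submodule.span_le]
      rintro _ ⟨a, rfl⟩
      simp only [SetLike.mem_coe, LinearMap.mem_ker]
      ext c
      have h := hLeib a a c
      simpa using h
    intro k hkm
    exact LinearMap.mem_ker.1 (hle hkm)
  have hpol : ∀ x y : L, β x y + β y x ∈ K := by
    intro x y
    have heq : β x y + β y x = β (x + y) (x + y) - β x x - β y y := by
      simp only [map_add, LinearMap.add_apply]; abel
    rw [heq]
    exact Submodule.sub_mem _ (Submodule.sub_mem _ (hsq (x + y)) (hsq x)) (hsq y)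
  have hdecomp : ∀ e : L, e ∉ K → ∀ x : L, ∃ c : F, ∃ k ∈ K, x = k + c • e := by
    intro e he x
    have he0 : e ≠ 0 := fun h => he (h ▸ K.zero_mem)
    have hinf : K ⊓ Submodule.span F {e} = ⊥ := by
      rw [Submodule.eq_bot_iff]
      intro y hy
      rw [Submodule.mem_inf] at hy
      obtain ⟨hy1, hy2⟩ := hy
      rw [Submodule.mem_span_singleton] at hy2
      obtain ⟨c, rfl⟩ := hy2
      by_contra hne
      have hcne : c ≠ 0 := by rintro rfl; simp at hne
      have : (c⁻¹ * c) • e ∈ K := by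
        rw [mul_smul]; exact Submodule.smul_mem K c⁻¹ hy1
      rw [inv_mul_cancel₀ hcne, one_smul] at this
      exact he this
    have htop : K ⊔ Submodule.span F {e} = ⊤ := by
      apply Submodule.eq_top_of_finrank_eq
      have hs := Submodule.finrank_sup_add_finrank_inf_eq K (Submodule.span F {e})
      rw [hinf, finrank_bot, finrank_span_singleton he0] at hs
      rw [hdim]
      omega
    have hx : x ∈ K ⊔ Submodule.span F {e} := htop ▸ Submodule.mem_top
    rw [Submodule.mem_sup] at hx
    obtain ⟨k, hk', y, hy, rfl⟩ := hx
    rw [Submodule.mem_span_singleton] at hy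
    obtain ⟨c, rfl⟩ := hy
    exact ⟨c, k, hk', rfl⟩
  have hexe : ∃ e : L, e ∉ K := by
    by_contra h
    push_neg at h
    have hKtop : K = ⊤ := Submodule.eq_top_iff'.2 h
    rw [hKtop] at hk
    rw [finrank_top, hdim] at hk
    omega
  obtain ⟨e, he⟩ := hexe
  have hbr : ∀ x y : L, β x y ∈ K := by
    intro x y
    obtain ⟨c, k, hkm, rfl⟩ := hdecomp e he x
    obtain ⟨d, k', hkm', rfl⟩ := hdecomp e he y
    have h1 : β k (k' + d • e) = 0 := by rw [hleft k hkm]; rfl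
    have h2 : β k' e = 0 := by rw [hleft k' hkm']; rfl
    have heK : β e k' ∈ K := by
      have := hpol e k'
      rwa [h2, add_zero] at this
    have hcalc : β (k + c • e) (k' + d • e)
        = β k (k' + d • e) + c • (β e k' + d • β e e) := by
      simp only [map_add, map_smul, LinearMap.add_apply, LinearMap.smul_apply]
      module
    rw [hcalc, h1, zero_add]
    exact Submodule.smul_mem _ _ (Submodule.add_mem _ heK (Submodule.smul_mem _ _ (hsq e)))
  have hcK : lzCenter β ≤ K := by
    intro z hz
    by_contra hzK
    obtain ⟨a, ha⟩ := hnotLie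
    apply ha
    obtain ⟨c, k, hkm, rfl⟩ := hdecomp z hzK a
    have hβ : β (k + c • z) = c • β z := by
      rw [map_add, hleft k hkm, map_smul, zero_add]
    rw [hβ, LinearMap.smul_apply, (hz (k + c • z)).1, smul_zero]
  refine ⟨?_, hcK⟩
  have hpos : 0 < finrank F (lzCenter β) := by
    rw [finrank_pos_iff]
    exact Submodule.nontrivial_iff_ne_bot.2 hc
  have hle2 : finrank F (lzCenter β) ≤ 2 :=
    hk ▸ Submodule.finrank_mono hcK
  by_contra hne
  have h2' : finrank F (lzCenter β) = 2 := by omega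
  have heqK : lzCenter β = K := by
    apply Submodule.eq_of_le_of_finrank_le hcK
    omega
  apply hnonnil
  refine ⟨3, ?_⟩
  have hg2 : leibGamma β 2 ≤ K := by
    show Submodule.span F {x | ∃ a b : L, b ∈ leibGamma β 1 ∧ β a b = x} ≤ K
    rw [Submodule.span_le]
    rintro _ ⟨a, b, _, rfl⟩
    exact hbr a b
  show Submodule.span F {x | ∃ a b : L, b ∈ leibGamma β 2 ∧ β a b = x} = ⊥
  rw [Submodule.span_eq_bot]
  rintro _ ⟨a, b, hb, rfl⟩
  have hbz : b ∈ lzCenter β := heqK ▸ (hg2 hb)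
  exact (hbz a).2
end

section
/- Let F be a field and let L be a left Leibniz algebra over F with dim_F L = 3 which is not a Lie algebra. Assume ζ(L) = 0, dim_F Leib(L) = 2, and Leib(L) contains no one-dimensional ideal of L (i.e., there is no nonzero subspace K ⊆ Leib(L) with dim_F K = 1 such that [x,u] ∈ K and [u,x] ∈ K for all x ∈ L, u ∈ K). Then there exist a basis (a1, a2, a3) of L and β, γ ∈ F such that [a1,a1] = a2, [a1,a2] = a3, [a1,a3] = β·a2 + γ·a3, all other brackets of basis vectors are zero, and the polynomial X² − γX − β is irreducible over F. -/
open Module Polynomial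

variable {F L : Type*} [Field F] [AddCommGroup L] [Module F L]

theorem stmt19 (β : L →ₗ[F] L →ₗ[F] L) (hLeib : IsLeibniz β)
    (hdim : finrank F L = 3) (hnotLie : ∃ a : L, β a a ≠ 0)
    (hc : lzCenter β = ⊥) (hk : finrank F (leibKer β) = 2)
    (hnoideal : ¬ ∃ K : Submodule F L, K ≤ leibKer β ∧ finrank F K = 1 ∧
      ∀ x u : L, u ∈ K → β x u ∈ K ∧ β u x ∈ K) :
    ∃ b : Basis (Fin 3) F L, ∃ β' γ : F,
      MulTbl β ⇑b ![![b 1, b 2, β' • b 1 + γ • b 2], ![0, 0, 0], ![0, 0, 0]] ∧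
      Irreducible (X ^ 2 - C γ * X - C β' : F[X]) := by
  have hfd : FiniteDimensional F L := FiniteDimensional.of_finrank_pos (by omega)
  obtain ⟨a, ha⟩ := hnotLie
  set K : Submodule F L := leibKer β with hKdef
  -- Left multiplication by elements of the Leibniz kernel is zero.
  have hleftker : K ≤ LinearMap.ker β := by
    rw [hKdef, leibKer, Submodule.span_le]
    rintro _ ⟨c, rfl⟩
    simp only [SetLike.mem_coe, LinearMap.mem_ker]
    ext x
    simp [hLeib c c x]
  have hleft : ∀ u ∈ K, ∀ x : L, β u x = 0 := by
    intro u hu x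
    have h := hleftker hu
    rw [LinearMap.mem_ker] at h
    rw [h]; rfl
  -- symmetric sums lie in K
  have hsym : ∀ x y : L, β x y + β y x ∈ K := by
    intro x y
    have h1 : β (x + y) (x + y) ∈ K := Submodule.subset_span ⟨x + y, rfl⟩
    have h2 : β x x ∈ K := Submodule.subset_span ⟨x, rfl⟩
    have h3 : β y y ∈ K := Submodule.subset_span ⟨y, rfl⟩
    have heq : β x y + β y x = β (x + y) (x + y) - β x x - β y y := by
      simp only [map_add, LinearMap.add_apply]
      abel
    rw [heq]
    exact sub_mem (sub_mem h1 h2) h3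
  -- K is a (right) ideal
  have hideal : ∀ x u : L, u ∈ K → β x u ∈ K := by
    intro x u hu
    have hle : K ≤ Submodule.comap (β x) K := by
      rw [hKdef, leibKer, Submodule.span_le]
      rintro _ ⟨c, rfl⟩
      simp only [SetLike.mem_coe, Submodule.mem_comap]
      have h2 : β x (β c c) = β (β x c) c + β c (β x c) := by
        rw [hLeib x c c]; abel
      rw [h2]
      exact hsym (β x c) c
    exact hle hu
  have haK : a ∉ K := fun h => ha (hleft a h a)
  set b1 : L := β a a with hb1def
  set b2 : L := β a b1 with hb2def
  have hb1K : b1 ∈ K := Submodule.subset_span ⟨a, rfl⟩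
  have hb2K : b2 ∈ K := hideal a b1 hb1K
  -- L = span a ⊔ K
  have htop : Submodule.span F {a} ⊔ K = ⊤ := by
    have hlt : K < Submodule.span F {a} ⊔ K := by
      refine lt_of_le_of_ne le_sup_right fun h => haK ?_
      rw [h]
      exact Submodule.mem_sup_left (Submodule.mem_span_singleton_self a)
    have h3 : 3 ≤ finrank F (Submodule.span F {a} ⊔ K : Submodule F L) := by
      have := Submodule.finrank_lt_finrank_of_lt hlt
      omega
    apply Submodule.eq_top_of_finrank_eq
    have hle := Submodule.finrank_le (Submodule.span F {a} ⊔ K)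
    omega
  have hdecomp : ∀ x : L, ∃ c : F, ∃ u ∈ K, x = c • a + u := by
    intro x
    have hx : x ∈ Submodule.span F {a} ⊔ K := htop ▸ Submodule.mem_top
    rw [Submodule.mem_sup] at hx
    obtain ⟨y, hy, z, hz, hyz⟩ := hx
    rw [Submodule.mem_span_singleton] at hy
    obtain ⟨c, rfl⟩ := hy
    exact ⟨c, z, hz, hyz.symm⟩
  -- bracket of anything with an element of K is a multiple of β a v
  have hbr : ∀ x v : L, v ∈ K → ∃ c : F, β x v = c • β a v := by
    intro x v hv
    obtain ⟨c, u, hu, rfl⟩ := hdecomp x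
    refine ⟨c, ?_⟩
    rw [map_add, map_smul, LinearMap.add_apply, LinearMap.smul_apply, hleft u hu v, add_zero]
  have hb1ne : b1 ≠ 0 := ha
  -- b2 ∉ span {b1}
  have hb2span : b2 ∉ Submodule.span F {b1} := by
    intro hmem
    apply hnoideal
    refine ⟨Submodule.span F {b1}, ?_, finrank_span_singleton hb1ne, ?_⟩
    · rw [Submodule.span_le, Set.singleton_subset_iff]; exact hb1K
    · intro x u hu
      rw [Submodule.mem_span_singleton] at hu
      obtain ⟨t, rfl⟩ := hu
      constructor
      · rw [map_smul]
        refine Submodule.smul_mem _ t ?_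
        obtain ⟨c, hc⟩ := hbr x b1 hb1K
        rw [hc, ← hb2def]
        exact Submodule.smul_mem _ c hmem
      · rw [map_smul, LinearMap.smul_apply, hleft b1 hb1K x, smul_zero]
        exact Submodule.zero_mem _
  have hb2ne : b2 ≠ 0 := fun h => hb2span (h ▸ Submodule.zero_mem _)
  have hb12 : LinearIndependent F ![b1, b2] := by
    rw [linearIndependent_fin2]
    refine ⟨by simpa using hb2ne, fun c hc => ?_⟩
    simp only [Matrix.cons_val_one, Matrix.head_cons, Matrix.cons_val_zero] at hc
    have hc0 : c ≠ 0 := by rintro rfl; rw [zero_smul] at hc; exact hb1ne hc.symm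
    apply hb2span
    rw [Submodule.mem_span_singleton]
    exact ⟨c⁻¹, by rw [← hc, smul_smul, inv_mul_cancel₀ hc0, one_smul]⟩
  -- span {b1, b2} = K
  have hspanK : Submodule.span F {b1, b2} = K := by
    apply Submodule.eq_of_le_of_finrank_le
    · rw [Submodule.span_le]
      rintro x hx
      rcases hx with rfl | hx
      · exact hb1K
      · rw [Set.mem_singleton_iff] at hx; subst hx; exact hb2K
    · have hcard : finrank F (Submodule.span F (Set.range ![b1, b2])) = 2 := by
        rw [finrank_span_eq_card hb12]; simp
      have hrange : Set.range ![b1, b2] = {b1, b2} := by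
        simp only [Matrix.range_cons, Matrix.range_empty, Set.union_empty,
          Set.union_singleton]
        exact Set.pair_comm _ _
      rw [hrange] at hcard
      rw [hk, hcard]
  obtain ⟨β', γ, hβγ⟩ : ∃ s t : F, s • b1 + t • b2 = β a b2 := by
    rw [← Submodule.mem_span_pair, hspanK]
    exact hideal a b2 hb2K
  -- the basis
  have hli : LinearIndependent F ![a, b1, b2] := by
    rw [show (![a, b1, b2] : Fin 3 → L) = Fin.cons a ![b1, b2] from rfl,
      linearIndependent_fin_cons]
    refine ⟨hb12, ?_⟩
    have hrange : Set.range ![b1, b2] = {b1, b2} := by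
      simp only [Matrix.range_cons, Matrix.range_empty, Set.union_empty,
        Set.union_singleton]
      exact Set.pair_comm _ _
    rw [hrange, hspanK]
    exact haK
  have hcard : Fintype.card (Fin 3) = finrank F L := by simp [hdim]
  refine ⟨basisOfLinearIndependentOfCardEqFinrank hli hcard, β', γ, ?_, ?_⟩
  · -- multiplication table
    intro i j
    rw [coe_basisOfLinearIndependentOfCardEqFinrank]
    fin_cases i <;> fin_cases j <;>
      simp [hleft b1 hb1K, hleft b2 hb2K, ← hb1def, ← hb2def, ← hβγ, Matrix.vecHead, Matrix.vecTail]
  · -- irreducibility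
    have hmonic : (X ^ 2 - C γ * X - C β' : F[X]).natDegree = 2 := by
      compute_degree!
    rw [irreducible_iff_roots_eq_zero_of_degree_le_three (by omega) (by omega)]
    rw [Multiset.eq_zero_iff_forall_notMem]
    intro lam hlam
    have hpne : (X ^ 2 - C γ * X - C β' : F[X]) ≠ 0 := fun h => by
      rw [h, natDegree_zero] at hmonic; omega
    rw [mem_roots hpne, IsRoot.def] at hlam
    simp only [eval_sub, eval_mul, eval_pow, eval_X, eval_C] at hlam
    -- eigenvector
    set v : L := (lam - γ) • b1 + b2 with hvdef
    have hvK : v ∈ K := add_mem (Submodule.smul_mem _ _ hb1K) hb2K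
    have hvne : v ≠ 0 := by
      intro h
      apply hb2span
      rw [Submodule.mem_span_singleton]
      refine ⟨-(lam - γ), ?_⟩
      have : b2 = -((lam - γ) • b1) := by
        rw [hvdef] at h
        linear_combination (norm := module) h
      rw [this, neg_smul]
    have heig : β a v = lam • v := by
      rw [hvdef, map_add, map_smul, ← hb2def, ← hβγ]
      have hcoef : β' = lam * (lam - γ) := by linear_combination -hlam
      rw [hcoef]
      module
    apply hnoideal
    refine ⟨Submodule.span F {v}, ?_, finrank_span_singleton hvne, ?_⟩
    · rw [Submodule.span_le, Set.singleton_subset_iff]; exact hvK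
    · intro x u hu
      rw [Submodule.mem_span_singleton] at hu
      obtain ⟨t, rfl⟩ := hu
      constructor
      · rw [map_smul]
        refine Submodule.smul_mem _ t ?_
        obtain ⟨c, hc⟩ := hbr x v hvK
        rw [hc, heig, smul_smul]
        exact Submodule.smul_mem _ _ (Submodule.mem_span_singleton_self v)
      · rw [map_smul, LinearMap.smul_apply, hleft v hvK x, smul_zero]
        exact Submodule.zero_mem _
end
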